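/- Let f₁,…,f_m, g : ℝⁿ → ℝ be Borel measurable, S ⊆ ℝⁿ, φ ∈ ℝᵐ, and suppose σ₋ = inf{z : (φ,z) ∈ γ(S,φ)} is finite. Then there exist α ∈ ℝᵐ, β ≥ 0 and c ∈ ℝ with (α,β) ≠ 0 such that ⟨α, f(x)⟩ + β·g(x) + c ≥ 0 for all x ∈ S, and the infimum over μ ∈ M(S,φ) of E_μ[⟨α, f(X)⟩ + β·g(X) + c] equals 0. -/

import Mathlib

/-!
Let `C` be the convex hull of `Γ(S)` and `D = C + {0} × [0, ∞)`. The point `(φ, σ₋)` lies in the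
closure of `C` but not in the interior of `D`, so a nonzero functional `F` attains its maximum over
`D` there; since `D` is unbounded upwards, `F (0, 1) ≤ 0`, and `(α, β, c)` are the coefficients of
the affine map `F (φ, σ₋) - F`. This map is nonnegative on `Γ(S)`, hence its integral is
nonnegative for every `μ ∈ M(S, φ)`. Conversely every point `(φ, z)` of `γ(S, φ)` is the mean of
a finite convex combination of Dirac masses on `S`, whose integral is `β (z - σ₋)`; letting `z`
decrease to `σ₋` shows that the infimum is `0`.
-/

open MeasureTheory Set Filter Topology
open scoped BigOperators ENNReal

noncomputable section

/-- The support of a measure: points all of whose open neighborhoods have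
positive measure. -/
def msupport {E : Type*} [TopologicalSpace E] [MeasurableSpace E]
    (μ : Measure E) : Set E :=
  {x | ∀ U : Set E, IsOpen U → x ∈ U → μ U ≠ 0}

/-- `M(S,φ)`: Borel probability measures with support contained in `S`,
with `E[f i] = φ i` for all `i` and `E[g]` finite. -/
def MC (n m : ℕ) (f : (Fin n → ℝ) → Fin m → ℝ) (g : (Fin n → ℝ) → ℝ)
    (S : Set (Fin n → ℝ)) (φ : Fin m → ℝ) : Set (Measure (Fin n → ℝ)) :=
  {μ | IsProbabilityMeasure μ ∧ msupport μ ⊆ S ∧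
    (∀ i, Integrable (fun x => f x i) μ) ∧ (∀ i, ∫ x, f x i ∂μ = φ i) ∧
    Integrable g μ}

/-- `γ(S,φ)`: intersection of the convex hull of `Γ(S)` with the line `{φ} × ℝ`,
where `Γ x = (f x, g x) ∈ ℝ^m × ℝ`. -/
def gam (n m : ℕ) (f : (Fin n → ℝ) → Fin m → ℝ) (g : (Fin n → ℝ) → ℝ)
    (S : Set (Fin n → ℝ)) (φ : Fin m → ℝ) : Set ((Fin m → ℝ) × ℝ) :=
  convexHull ℝ ((fun x => (f x, g x)) '' S) ∩ {p | p.1 = φ}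

open scoped Pointwise

theorem EReal.biInf_coe_eq_iff_isGLB {ι : Type*} {s : Set ι} {u : ι → ℝ} {a : ℝ} :
    ⨅ i ∈ s, (u i : EReal) = a ↔ IsGLB (u '' s) a := by
  refine ⟨fun h => ?_, fun h => ?_⟩
  · have := isGLB_biInf (s := s) (f := fun i => (u i : EReal))
    rw [h, ← image_image (fun r : ℝ => (r : EReal)) u s] at this
    exact this.of_image EReal.coe_le_coe_iff
  refine le_antisymm ?_ (le_iInf₂ fun i hi => EReal.coe_le_coe (h.1 (mem_image_of_mem u hi)))
  by_contra! hlt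
  obtain ⟨r, har, hr⟩ := EReal.exists_between_coe_real hlt
  have hra : r ≤ a := h.2 <| forall_mem_image.2 fun i hi =>
    EReal.coe_le_coe_iff.1 (hr.le.trans (iInf₂_le i hi))
  exact (EReal.coe_lt_coe_iff.1 har).not_ge hra

theorem Convex.exists_ne_zero_forall_eq_of_interior_eq_empty {E : Type*} [NormedAddCommGroup E]
    [NormedSpace ℝ E] [FiniteDimensional ℝ E] {D : Set E} (hD : Convex ℝ D)
    (hint : interior D = ∅) {q : E} (hq : q ∈ closure D) :
    ∃ F : StrongDual ℝ E, F ≠ 0 ∧ ∀ p ∈ D, F p = F q := by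
  have hspan : affineSpan ℝ D ≠ ⊤ := by
    simp [Ne, ← hD.interior_nonempty_iff_affineSpan_eq_top, hint]
  have hqs : q ∈ affineSpan ℝ D :=
    closure_minimal (subset_affineSpan ℝ D) (AffineSubspace.closed_of_finiteDimensional _) hq
  have hdir : (affineSpan ℝ D).direction < ⊤ := lt_top_iff_ne_top.2 fun h =>
    hspan ((AffineSubspace.direction_eq_top_iff_of_nonempty ⟨q, hqs⟩).1 h)
  obtain ⟨F, hF0, hker⟩ := Submodule.exists_le_ker_of_lt_top _ hdir
  refine ⟨LinearMap.toContinuousLinearMap F, fun h => hF0 (LinearMap.ext fun x => ?_),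
    fun p hp => ?_⟩
  · simpa using congr($h x)
  · simpa [sub_eq_zero] using
      hker (AffineSubspace.vsub_mem_direction (subset_affineSpan ℝ D hp) hqs)

theorem Convex.exists_ne_zero_forall_le_of_notMem_interior {E : Type*} [NormedAddCommGroup E]
    [NormedSpace ℝ E] [FiniteDimensional ℝ E] {D : Set E} (hD : Convex ℝ D) {q : E}
    (hq : q ∉ interior D) (hqD : q ∈ closure D) :
    ∃ F : StrongDual ℝ E, F ≠ 0 ∧ ∀ p ∈ D, F p ≤ F q := by
  rcases (interior D).eq_empty_or_nonempty with hint | hint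
  · obtain ⟨F, hF0, hF⟩ := hD.exists_ne_zero_forall_eq_of_interior_eq_empty hint hqD
    exact ⟨F, hF0, fun p hp => (hF p hp).le⟩
  · exact geometric_hahn_banach_of_nonempty_interior_point hD hq hint

theorem Convex.exists_supporting_functional_of_isGLB {E : Type*} [NormedAddCommGroup E]
    [NormedSpace ℝ E] [FiniteDimensional ℝ E] {C : Set (E × ℝ)} (hC : Convex ℝ C) {φ : E}
    {σ : ℝ} (hσ : IsGLB (Prod.snd '' (C ∩ {p | p.1 = φ})) σ) :
    ∃ F : StrongDual ℝ (E × ℝ), F ≠ 0 ∧ F (0, 1) ≤ 0 ∧ ∀ p ∈ C, F p ≤ F (φ, σ) := by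
  set D := C + ({0} ×ˢ Ici 0 : Set (E × ℝ))
  have hD : Convex ℝ D := hC.add ((convex_singleton 0).prod (convex_Ici 0))
  have hmem {p : E × ℝ} {t : ℝ} (hp : p ∈ C) (ht : 0 ≤ t) : p + (0, t) ∈ D :=
    add_mem_add hp ⟨rfl, ht⟩
  have hCD : C ⊆ D := fun p hp => by simpa only [Prod.mk_zero_zero, add_zero] using hmem hp le_rfl
  have hline : Continuous fun z : ℝ => (φ, z) := continuous_const.prodMk continuous_id
  have hclosure : (φ, σ) ∈ closure C := by
    refine map_mem_closure hline (hσ.mem_closure hσ.nonempty) ?_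
    rintro _ ⟨p, ⟨hpC, rfl⟩, rfl⟩
    exact hpC
  have hinterior : (φ, σ) ∉ interior D := by
    intro h
    have hnhds : ∀ᶠ z in 𝓝[<] σ, (φ, z) ∈ D :=
      nhdsWithin_le_nhds (hline.continuousAt.preimage_mem_nhds (mem_interior_iff_mem_nhds.1 h))
    obtain ⟨z, ⟨p, hpC, ⟨a, t⟩, ⟨rfl, ht⟩, hpz⟩, hzσ⟩ :=
      (hnhds.and self_mem_nhdsWithin).exists
    have hp1 : p.1 = φ := by simpa using congr($hpz.1)
    have hp2 : p.2 + t = z := congr($hpz.2)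
    have := hσ.1 ⟨p, ⟨hpC, hp1⟩, rfl⟩
    simp only [mem_Ici] at ht
    linarith
  obtain ⟨F, hF0, hF⟩ := hD.exists_ne_zero_forall_le_of_notMem_interior hinterior
    (closure_mono hCD hclosure)
  refine ⟨F, hF0, ?_, fun p hp => hF p (hCD hp)⟩
  obtain ⟨_, ⟨p, ⟨hpC, hp1⟩, rfl⟩, -, hpσ⟩ := hσ.exists_between (lt_add_one σ)
  have hshift : p + (0, σ + 1 - p.2) = (φ, σ) + (0, 1) := by
    ext
    · simpa using hp1
    · simp only [Prod.snd_add]; ring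
  have := hF _ (hmem hpC (by linarith : 0 ≤ σ + 1 - p.2))
  rw [hshift, map_add] at this
  linarith

theorem LinearMap.apply_prod_eq_sum {R M ι : Type*} [CommSemiring R] [AddCommMonoid M] [Module R M]
    [Fintype ι] [DecidableEq ι] (F : (ι → R) × R →ₗ[R] M) (y : ι → R) (z : R) :
    F (y, z) = ∑ i, y i • F (Pi.single i 1, 0) + z • F (0, 1) := by
  have : (y, z) = ∑ i, y i • ((Pi.single i 1 : ι → R), (0 : R)) + z • ((0 : ι → R), (1 : R)) := by
    ext
    · simp [Prod.fst_sum, Finset.sum_apply, Pi.single_apply]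
    · simp [Prod.snd_sum]
  rw [this, map_add, map_sum]
  simp only [map_smul]

theorem msupport_eq_support {E : Type*} [TopologicalSpace E] [MeasurableSpace E]
    (μ : Measure E) : msupport μ = μ.support := by
  ext x
  simp only [msupport, Measure.support_eq_forall_isOpen, pos_iff_ne_zero, mem_ofPred_eq]
  exact forall_congr' fun _ => forall_comm

theorem ae_mem_of_msupport_subset {E : Type*} [TopologicalSpace E] [HereditarilyLindelofSpace E]
    [MeasurableSpace E] {μ : Measure E} {S : Set E} (hS : msupport μ ⊆ S) : ∀ᵐ x ∂μ, x ∈ S :=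
  mem_of_superset Measure.support_mem_ae (msupport_eq_support μ ▸ hS)

section DiracCombination

variable {X ι : Type*} [MeasurableSpace X] [Fintype ι]
  (w : ι → ℝ) (x : ι → X)

theorem integrable_sum_smul_dirac [MeasurableSingletonClass X] (h : X → ℝ) :
    Integrable h (∑ i, ENNReal.ofReal (w i) • Measure.dirac (x i)) :=
  integrable_finsetSum_measure.2 fun _ _ =>
    (integrable_dirac enorm_lt_top).smul_measure ENNReal.ofReal_ne_top

theorem integral_sum_smul_dirac [MeasurableSingletonClass X] (hw : ∀ i, 0 ≤ w i) (h : X → ℝ) :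
    ∫ y, h y ∂(∑ i, ENNReal.ofReal (w i) • Measure.dirac (x i)) = ∑ i, w i * h (x i) := by
  rw [integral_finsetSum_measure fun _ _ =>
    (integrable_dirac enorm_lt_top).smul_measure ENNReal.ofReal_ne_top]
  simp [integral_smul_measure, ENNReal.toReal_ofReal (hw _)]

theorem isProbabilityMeasure_sum_smul_dirac (hw : ∀ i, 0 ≤ w i) (hw1 : ∑ i, w i = 1) :
    IsProbabilityMeasure (∑ i, ENNReal.ofReal (w i) • Measure.dirac (x i)) := by
  constructor
  simp [← ENNReal.ofReal_sum_of_nonneg fun i _ => hw i, hw1]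

theorem ae_mem_range_sum_smul_dirac [MeasurableSingletonClass X] :
    ∀ᵐ y ∂(∑ i, ENNReal.ofReal (w i) • Measure.dirac (x i)), y ∈ range x :=
  ae_finsetSum_measure_iff.2 fun i _ => Measure.ae_smul_measure (by simp [ae_dirac_eq]) _

end DiracCombination

theorem exists_mem_MC_integral_eq {n m : ℕ} (f : (Fin n → ℝ) → Fin m → ℝ)
    (g : (Fin n → ℝ) → ℝ) (S : Set (Fin n → ℝ)) {p : (Fin m → ℝ) × ℝ}
    (hp : p ∈ convexHull ℝ ((fun x => (f x, g x)) '' S)) :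
    ∃ μ ∈ MC n m f g S p.1, ∫ x, g x ∂μ = p.2 := by
  obtain ⟨ι, _, w, z, hw0, hw1, hz, rfl⟩ := mem_convexHull_iff_exists_fintype.1 hp
  choose x hxS hxz using hz
  obtain rfl : z = fun i => (f (x i), g (x i)) := funext fun i => (hxz i).symm
  have hsupp : msupport (∑ i, ENNReal.ofReal (w i) • Measure.dirac (x i)) ⊆ S := by
    rw [msupport_eq_support]
    refine (Measure.support_subset_of_isClosed (finite_range x).isClosed
      (ae_mem_range_sum_smul_dirac w x)).trans ?_
    exact range_subset_iff.2 hxS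
  refine ⟨_, ⟨isProbabilityMeasure_sum_smul_dirac w x hw0 hw1, hsupp,
    fun _ => integrable_sum_smul_dirac w x _, fun j => ?_, integrable_sum_smul_dirac w x _⟩, ?_⟩
  · simp [integral_sum_smul_dirac w x hw0, Prod.fst_sum, Finset.sum_apply]
  · simp [integral_sum_smul_dirac w x hw0, Prod.snd_sum]

theorem integral_sum_mul_add_mul_add_const {X ι : Type*} [MeasurableSpace X] [Fintype ι]
    {μ : Measure X} [IsProbabilityMeasure μ] {f : X → ι → ℝ} {g : X → ℝ}
    (hf : ∀ i, Integrable (fun x => f x i) μ) (hg : Integrable g μ) (α : ι → ℝ) (β c : ℝ) :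
    ∫ x, (∑ i, α i * f x i) + β * g x + c ∂μ =
      (∑ i, α i * ∫ x, f x i ∂μ) + β * ∫ x, g x ∂μ + c := by
  have hsum : Integrable (fun x => ∑ i, α i * f x i) μ :=
    integrable_finsetSum _ fun i _ => (hf i).const_mul _
  have hsum_add : Integrable (fun x => (∑ i, α i * f x i) + β * g x) μ :=
    hsum.add (hg.const_mul β)
  rw [integral_add hsum_add (integrable_const c),
    integral_add hsum (hg.const_mul β), integral_finsetSum _ fun i _ => (hf i).const_mul _]
  simp [integral_const_mul]

theorem isGLB_integral_MC {n m : ℕ} {f : (Fin n → ℝ) → Fin m → ℝ} {g : (Fin n → ℝ) → ℝ}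
    {S : Set (Fin n → ℝ)} {φ : Fin m → ℝ} {σ : ℝ} (hσ : IsGLB (Prod.snd '' gam n m f g S φ) σ)
    {α : Fin m → ℝ} {β c : ℝ} (hβ : 0 ≤ β) (hpos : ∀ x ∈ S, 0 ≤ (∑ i, α i * f x i) + β * g x + c)
    (hzero : (∑ i, α i * φ i) + β * σ + c = 0) :
    IsGLB ((fun μ => ∫ x, (∑ i, α i * f x i) + β * g x + c ∂μ) '' MC n m f g S φ) 0 := by
  set h : ℝ → ℝ := fun z => (∑ i, α i * φ i) + β * z + c
  have hh : IsGLB (h '' (Prod.snd '' gam n m f g S φ)) 0 := by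
    rw [← hzero]
    exact hσ.isGLB_of_tendsto (fun z _ z' _ hzz' => by simp only [h]; gcongr)
      hσ.nonempty ((Continuous.tendsto (by fun_prop) σ).mono_left nhdsWithin_le_nhds)
  refine hh.of_subset_of_superset isGLB_Ici ?_ ?_
  · rintro _ ⟨_, ⟨p, hp, rfl⟩, rfl⟩
    obtain ⟨μ, hμ, hμg⟩ := exists_mem_MC_integral_eq f g S hp.1
    rw [hp.2] at hμ
    have ⟨_, _, hfi, hfφ, hgi⟩ := hμ
    exact ⟨μ, hμ, by simp only [integral_sum_mul_add_mul_add_const hfi hgi, hfφ, hμg, h]⟩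
  · rintro _ ⟨μ, ⟨-, hsupp, -⟩, rfl⟩
    exact integral_nonneg_of_ae ((ae_mem_of_msupport_subset hsupp).mono hpos)

theorem supporting_hyperplane_inf_general {n m : ℕ}
    (f : (Fin n → ℝ) → Fin m → ℝ) (g : (Fin n → ℝ) → ℝ)
    (S : Set (Fin n → ℝ)) (φ : Fin m → ℝ) (σm : ℝ)
    (hσ : (⨅ p ∈ gam n m f g S φ, ((p.2 : ℝ) : EReal)) = (σm : EReal)) :
    ∃ (α : Fin m → ℝ) (β c : ℝ), 0 ≤ β ∧
      ((α, β) : (Fin m → ℝ) × ℝ) ≠ 0 ∧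
      (∀ x ∈ S, 0 ≤ (∑ i, α i * f x i) + β * g x + c) ∧
      (⨅ μ ∈ MC n m f g S φ,
        ((∫ x, ((∑ i, α i * f x i) + β * g x + c) ∂μ : ℝ) : EReal)) = 0 := by
  have hglb : IsGLB (Prod.snd '' gam n m f g S φ) σm := EReal.biInf_coe_eq_iff_isGLB.1 hσ
  obtain ⟨F, hF0, hF01, hFC⟩ := (convex_convexHull ℝ _).exists_supporting_functional_of_isGLB hglb
  set α : Fin m → ℝ := fun i => -F (Pi.single i 1, 0)
  set β : ℝ := -F (0, 1)
  set c : ℝ := F (φ, σm)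
  have hβ : 0 ≤ β := neg_nonneg.2 hF01
  have hcoord : ∀ y z, F (y, z) = -(∑ i, α i * y i) - β * z := by
    intro y z
    rw [← F.coe_coe, LinearMap.apply_prod_eq_sum]
    simp [α, β, mul_comm]
  have hF : ∀ y z, (∑ i, α i * y i) + β * z + c = c - F (y, z) := by
    intro y z
    rw [hcoord]
    ring
  have hpos : ∀ x ∈ S, 0 ≤ (∑ i, α i * f x i) + β * g x + c := fun x hx => by
    rw [hF]
    exact sub_nonneg.2 (hFC _ (subset_convexHull ℝ _ ⟨x, hx, rfl⟩))
  refine ⟨α, β, c, hβ, fun hαβ => hF0 ?_, hpos,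
    EReal.biInf_coe_eq_iff_isGLB.2 (isGLB_integral_MC hglb hβ hpos ((hF φ σm).trans (sub_self c)))⟩
  obtain ⟨hα0, hβ0⟩ := Prod.mk_eq_zero.1 hαβ
  refine ContinuousLinearMap.ext fun ⟨y, z⟩ => ?_
  simp [hcoord, hα0, hβ0]

/-- supporting-hyperplane theorem, infimum case. -/
theorem supporting_hyperplane_inf {n m : ℕ}
    (f : (Fin n → ℝ) → Fin m → ℝ) (g : (Fin n → ℝ) → ℝ)
    (hf : ∀ i, Measurable fun x => f x i) (hg : Measurable g)
    (S : Set (Fin n → ℝ)) (φ : Fin m → ℝ) (σm : ℝ)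
    (hσ : (⨅ p ∈ gam n m f g S φ, ((p.2 : ℝ) : EReal)) = (σm : EReal)) :
    ∃ (α : Fin m → ℝ) (β c : ℝ), 0 ≤ β ∧
      ((α, β) : (Fin m → ℝ) × ℝ) ≠ 0 ∧
      (∀ x ∈ S, 0 ≤ (∑ i, α i * f x i) + β * g x + c) ∧
      (⨅ μ ∈ MC n m f g S φ,
        ((∫ x, ((∑ i, α i * f x i) + β * g x + c) ∂μ : ℝ) : EReal)) = 0 :=
  supporting_hyperplane_inf_general f g S φ σm hσ
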